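/- Let P = ν·I with ν > 0, F ∈ ℝ^{n×n}, and suppose [[P·F + Fᵀ·P + (α² + ε)·I, P·F], [Fᵀ·P, -I]] ⪯ 0. Let H be symmetric with c₁·I ⪯ H ⪯ c₂·I where 0 < c₁ ≤ c₂, β = (c₁+c₂)/2, μ = (c₂-c₁)/2, α = μ/β, δ = ε·β². Then for A = H·Fᵀ, the matrix νβ·(Aᵀ + A') satisfies: νβ·(H·Fᵀ + F·H) + δ·I ⪯ 0, i.e., νβ·(H·Fᵀ + F·H) ⪯ -δ·I. -/

import Mathlib

/-!
Write `H = X + β I`, so that `-μ I ⪯ X ⪯ μ I` and hence `X² ⪯ μ² I` (the spectrum of `X` lies in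
`[-μ, μ]`). Conjugating the negated LMI by the block column `T = [β I; X]` and using `μ = α β`
gives the exact identity
`-(νβ (H Fᵀ + F H) + δ I) = Tᵀ (-LMI) T + (μ² I - X²)`,
a sum of two positive semidefinite matrices.
-/

open Matrix

theorem IsSelfAdjoint.sq_le_algebraMap_sq {A : Type*} [TopologicalSpace A] [Ring A] [StarRing A]
    [PartialOrder A] [StarOrderedRing A] [Algebra ℝ A]
    [ContinuousFunctionalCalculus ℝ A IsSelfAdjoint] [NonnegSpectrumClass ℝ A]
    {a : A} {r : ℝ} (ha : IsSelfAdjoint a) (hlb : algebraMap ℝ A (-r) ≤ a)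
    (hub : a ≤ algebraMap ℝ A r) : a ^ 2 ≤ algebraMap ℝ A (r ^ 2) := by
  rw [algebraMap_le_iff_le_spectrum] at hlb
  rw [le_algebraMap_iff_spectrum_le] at hub
  rw [← cfc_pow_id (R := ℝ) a 2]
  exact cfc_le_algebraMap _ _ a fun x hx => sq_le_sq' (hlb x hx) (hub x hx)

section

open scoped MatrixOrder

variable {ι : Type*} [Fintype ι] [DecidableEq ι]

theorem Matrix.PosSemidef.sq_smul_one_sub_mul_self {X : Matrix ι ι ℝ} {μ : ℝ}
    (hlb : (X + μ • 1).PosSemidef) (hub : (μ • 1 - X).PosSemidef) :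
    (μ ^ 2 • 1 - X * X).PosSemidef := by
  have hX : X.IsHermitian := by
    simpa using (isHermitian_one.smul (IsSelfAdjoint.all μ)).sub hub.isHermitian
  rw [← nonneg_iff_posSemidef, sub_nonneg, ← sq, ← Algebra.algebraMap_eq_smul_one]
  refine IsSelfAdjoint.sq_le_algebraMap_sq hX ?_ ?_
  · rwa [Matrix.le_iff, map_neg, Algebra.algebraMap_eq_smul_one, sub_neg_eq_add]
  · rwa [Matrix.le_iff, Algebra.algebraMap_eq_smul_one]

theorem neg_lyapunov_bound_eq_congr_lmi_add (ν β α ε : ℝ) (F H : Matrix ι ι ℝ)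
    (hH : H.IsHermitian) :
    -((ν * β) • (H * Fᵀ + F * H) + (ε * β ^ 2) • (1 : Matrix ι ι ℝ))
      = (fromRows (β • 1 : Matrix ι ι ℝ) (H - β • 1))ᴴ * -(fromBlocks
          ((ν • (1 : Matrix ι ι ℝ)) * F + Fᵀ * (ν • (1 : Matrix ι ι ℝ)) + (α ^ 2 + ε) • 1)
          ((ν • (1 : Matrix ι ι ℝ)) * F) (Fᵀ * (ν • (1 : Matrix ι ι ℝ))) (-1))
          * fromRows (β • 1 : Matrix ι ι ℝ) (H - β • 1)
        + ((α * β) ^ 2 • 1 - (H - β • 1) * (H - β • 1)) := by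
  rw [conjTranspose_fromRows_eq_fromCols_conjTranspose, conjTranspose_sub, hH.eq,
    Matrix.mul_neg, Matrix.neg_mul, Matrix.mul_assoc, fromBlocks_mul_fromRows,
    fromCols_mul_fromRows]
  simp only [conjTranspose_smul, conjTranspose_one, star_trivial, mul_add, mul_sub,
    sub_mul, smul_mul_assoc, mul_smul_comm, one_mul, mul_one, Matrix.neg_mul, Matrix.mul_neg]
  module

end

theorem stmt_14_general {n : ℕ} (ν : ℝ) (F : Matrix (Fin n) (Fin n) ℝ)
    (H : Matrix (Fin n) (Fin n) ℝ) (hH : H.IsHermitian)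
    (c₁ c₂ ε : ℝ) (hc₁ : 0 < c₁) (hc₁₂ : c₁ ≤ c₂)
    (β μ α δ : ℝ) (hβ : β = (c₁ + c₂) / 2) (hμ : μ = (c₂ - c₁) / 2)
    (hα : α = μ / β) (hδ : δ = ε * β ^ 2)
    (hHlb : (H - c₁ • (1 : Matrix (Fin n) (Fin n) ℝ)).PosSemidef)
    (hHub : (c₂ • (1 : Matrix (Fin n) (Fin n) ℝ) - H).PosSemidef)
    (hLMI : (-(Matrix.fromBlocks
        ((ν • (1 : Matrix (Fin n) (Fin n) ℝ)) * F
          + Fᵀ * (ν • (1 : Matrix (Fin n) (Fin n) ℝ))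
          + (α ^ 2 + ε) • (1 : Matrix (Fin n) (Fin n) ℝ))
        ((ν • (1 : Matrix (Fin n) (Fin n) ℝ)) * F)
        (Fᵀ * (ν • (1 : Matrix (Fin n) (Fin n) ℝ)))
        (-1))).PosSemidef) :
    (-((ν * β) • (H * Fᵀ + F * H) + δ • (1 : Matrix (Fin n) (Fin n) ℝ))).PosSemidef := by
  have hβpos : 0 < β := by rw [hβ]; linarith
  have hμα : μ = α * β := by rw [hα, div_mul_cancel₀ μ hβpos.ne']
  rw [hδ, neg_lyapunov_bound_eq_congr_lmi_add ν β α ε F H hH, ← hμα]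
  refine (hLMI.conjTranspose_mul_mul_same _).add (PosSemidef.sq_smul_one_sub_mul_self ?_ ?_)
  · convert hHlb using 1
    rw [hμ, hβ]
    module
  · convert hHub using 1
    rw [hμ, hβ]
    module

theorem stmt_14 {n : ℕ} (ν : ℝ) (hν : 0 < ν) (F : Matrix (Fin n) (Fin n) ℝ)
    (H : Matrix (Fin n) (Fin n) ℝ) (hH : H.IsHermitian)
    (c₁ c₂ ε : ℝ) (hc₁ : 0 < c₁) (hc₁₂ : c₁ ≤ c₂) (hε : 0 < ε)
    (β μ α δ : ℝ) (hβ : β = (c₁ + c₂) / 2) (hμ : μ = (c₂ - c₁) / 2)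
    (hα : α = μ / β) (hδ : δ = ε * β ^ 2)
    (hHlb : (H - c₁ • (1 : Matrix (Fin n) (Fin n) ℝ)).PosSemidef)
    (hHub : (c₂ • (1 : Matrix (Fin n) (Fin n) ℝ) - H).PosSemidef)
    (hLMI : (-(Matrix.fromBlocks
        ((ν • (1 : Matrix (Fin n) (Fin n) ℝ)) * F
          + Fᵀ * (ν • (1 : Matrix (Fin n) (Fin n) ℝ))
          + (α ^ 2 + ε) • (1 : Matrix (Fin n) (Fin n) ℝ))
        ((ν • (1 : Matrix (Fin n) (Fin n) ℝ)) * F)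
        (Fᵀ * (ν • (1 : Matrix (Fin n) (Fin n) ℝ)))
        (-1))).PosSemidef) :
    (-((ν * β) • (H * Fᵀ + F * H) + δ • (1 : Matrix (Fin n) (Fin n) ℝ))).PosSemidef :=
  stmt_14_general ν F H hH c₁ c₂ ε hc₁ hc₁₂ β μ α δ hβ hμ hα hδ hHlb hHub hLMI
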